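/- Let g¹,...,g^N be vectors in R^d with ||g^i||² ≤ G² wherever they appear over iterations τ = t₀,...,t−1 with t − t₀ ≤ I. Define x̄_τ and x^i_τ by the recursions x^i_{τ+1} = x^i_τ − γ g^i_τ and x̄_{τ+1} = x̄_τ − γ (1/N)∑_j g^j_τ, with x̄_{t₀} = x^i_{t₀}. Then ||x̄_t − x^i_t||² ≤ 4γ²I²G². -/

import Mathlib

open scoped BigOperators

/-!
Both the local model `x i` and the averaged iterate `xbar` move by `γ` times a vector of norm at
most `|G|` per step (the average of the `g j τ` is a convex combination), so their difference
moves by at most `2|γ||G|` per step. It vanishes at `t₀`, and after at most `I` steps it has norm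
at most `2|γ|I|G|`.
-/

lemma norm_inv_card_smul_sum_le {ι E : Type*} [Fintype ι] [SeminormedAddCommGroup E]
    [NormedSpace ℝ E] {v : ι → E} {C : ℝ} (hC : 0 ≤ C) (hv : ∀ j, ‖v j‖ ≤ C) :
    ‖(Fintype.card ι : ℝ)⁻¹ • ∑ j, v j‖ ≤ C := by
  rcases isEmpty_or_nonempty ι with hι | hι
  · simpa using hC
  have hcard : (0 : ℝ) < Fintype.card ι := by exact_mod_cast Fintype.card_pos
  calc ‖(Fintype.card ι : ℝ)⁻¹ • ∑ j, v j‖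
      = (Fintype.card ι : ℝ)⁻¹ * ‖∑ j, v j‖ := by
        rw [norm_smul, norm_inv, Real.norm_natCast]
    _ ≤ (Fintype.card ι : ℝ)⁻¹ * (Fintype.card ι * C) := by
        gcongr
        simpa using norm_sum_le_of_le Finset.univ fun j _ => hv j
    _ = C := by field_simp

lemma norm_le_of_norm_sub_succ_le {E : Type*} [SeminormedAddCommGroup E] {e : ℕ → E}
    {t₀ t : ℕ} {D : ℝ} (ht : t₀ ≤ t) (h₀ : e t₀ = 0)
    (hstep : ∀ τ, t₀ ≤ τ → τ < t → ‖e (τ + 1) - e τ‖ ≤ D) :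
    ‖e t‖ ≤ (t - t₀ : ℕ) * D := by
  have h := dist_le_Ico_sum_of_dist_le (f := e) ht (d := fun _ => D) fun hτ hτt => by
    rw [dist_comm, dist_eq_norm]
    exact hstep _ hτ hτt
  simpa [h₀, dist_eq_norm] using h

theorem stmt8_general {d N : ℕ} (γ G : ℝ) (I t₀ t : ℕ)
    (ht₀ : t₀ ≤ t) (hI : t - t₀ ≤ I)
    (g : Fin N → ℕ → EuclideanSpace ℝ (Fin d))
    (x : Fin N → ℕ → EuclideanSpace ℝ (Fin d))
    (xbar : ℕ → EuclideanSpace ℝ (Fin d))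
    (hG : ∀ i τ, ‖g i τ‖ ^ 2 ≤ G ^ 2)
    (hinit : ∀ i, xbar t₀ = x i t₀)
    (hlocal : ∀ i τ, t₀ ≤ τ → τ < t → x i (τ + 1) = x i τ - γ • g i τ)
    (havg : ∀ τ, t₀ ≤ τ → τ < t →
      xbar (τ + 1) = xbar τ - γ • ((N : ℝ)⁻¹ • ∑ j, g j τ)) :
    ∀ i, ‖xbar t - x i t‖ ^ 2 ≤ 4 * γ ^ 2 * I ^ 2 * G ^ 2 := by
  intro i
  have hg : ∀ j τ, ‖g j τ‖ ≤ |G| := fun j τ => by simpa using sq_le_sq.mp (hG j τ)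
  have havg_le : ∀ τ, ‖(N : ℝ)⁻¹ • ∑ j, g j τ‖ ≤ |G| := fun τ => by
    simpa using norm_inv_card_smul_sum_le (abs_nonneg G) (hg · τ)
  have hdev : ‖xbar t - x i t‖ ≤ (t - t₀ : ℕ) * (|γ| * (|G| + |G|)) := by
    refine norm_le_of_norm_sub_succ_le (e := fun τ => xbar τ - x i τ) ht₀ (by simp [hinit i])
      fun τ hτ hτt => ?_
    calc ‖xbar (τ + 1) - x i (τ + 1) - (xbar τ - x i τ)‖
        = ‖γ • (g i τ - (N : ℝ)⁻¹ • ∑ j, g j τ)‖ := by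
          rw [hlocal i τ hτ hτt, havg τ hτ hτt]
          congr 1
          module
      _ ≤ |γ| * (|G| + |G|) := by
          rw [norm_smul, Real.norm_eq_abs]
          gcongr
          exact (norm_sub_le _ _).trans (add_le_add (hg i τ) (havg_le τ))
  have hsteps : ((t - t₀ : ℕ) : ℝ) ≤ I := by exact_mod_cast hI
  calc ‖xbar t - x i t‖ ^ 2 ≤ (I * (|γ| * (|G| + |G|))) ^ 2 := by
        gcongr
        exact hdev.trans (by gcongr)
    _ = 4 * γ ^ 2 * I ^ 2 * G ^ 2 := by ring_nf; simp only [sq_abs]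

/-- Lemma 3 of the paper (deviation of local models in local SGD): starting from
a common point at iteration `t₀`, after at most `I` local steps with gradients of
norm squared at most `G²` and step size `γ`, each local model deviates from the
virtual averaged iterate by at most `4γ²I²G²` in squared norm. -/
theorem stmt8 {d N : ℕ} (hN : 0 < N) (γ G : ℝ) (hγ : 0 < γ) (I t₀ t : ℕ)
    (ht₀ : t₀ ≤ t) (hI : t - t₀ ≤ I)
    (g : Fin N → ℕ → EuclideanSpace ℝ (Fin d))
    (x : Fin N → ℕ → EuclideanSpace ℝ (Fin d))
    (xbar : ℕ → EuclideanSpace ℝ (Fin d))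
    (hG : ∀ i τ, ‖g i τ‖ ^ 2 ≤ G ^ 2)
    (hinit : ∀ i, xbar t₀ = x i t₀)
    (hlocal : ∀ i τ, t₀ ≤ τ → τ < t → x i (τ + 1) = x i τ - γ • g i τ)
    (havg : ∀ τ, t₀ ≤ τ → τ < t →
      xbar (τ + 1) = xbar τ - γ • ((N : ℝ)⁻¹ • ∑ j, g j τ)) :
    ∀ i, ‖xbar t - x i t‖ ^ 2 ≤ 4 * γ ^ 2 * I ^ 2 * G ^ 2 :=
  stmt8_general γ G I t₀ t ht₀ hI g x xbar hG hinit hlocal havg
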